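/- Let p ∈ ℝ, c > 0, K ≥ 0, τ₀ < τ̄ ≤ ∞. Let t : [τ₀, τ̄) → (0, ∞) be continuously differentiable with t′(τ) ≥ c for all τ, and let x : [τ₀, τ̄) → ℝ be twice continuously differentiable with x′(τ₀) = 0 and x″(τ) + p · t(τ)⁻¹ · t′(τ) · x′(τ) = ς(τ), where |ς(τ)| ≤ K · t(τ)^{−p} for all τ. Then for every τ ∈ [τ₀, τ̄): |x′(τ)| ≤ (K/c) · t(τ)^{−p} · (t(τ) − t(τ₀)). -/
import Mathlib


/-- Damped-oscillation estimate from the proof of the Lemma of Appendix A: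
if on `[τ₀, τ̄)` (with `τ̄ ≤ ∞`) we have `t > 0`, `t' ≥ c > 0`, `x'(τ₀) = 0`
and `x'' + p t⁻¹ t' x' = ς` with `|ς(τ)| ≤ K t(τ)^(-p)`, then
`|x'(τ)| ≤ (K/c) t(τ)^(-p) (t(τ) - t(τ₀))`. -/
theorem stmt_3 (p c K τ₀ : ℝ) (τb : EReal)
    (hc : 0 < c) (hK : 0 ≤ K) (hτb : (τ₀ : EReal) < τb)
    (t t' : ℝ → ℝ) (x x' x'' ς : ℝ → ℝ)
    (D : Set ℝ) (hD : D = {τ : ℝ | τ₀ ≤ τ ∧ (τ : EReal) < τb})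
    (htpos : ∀ τ ∈ D, 0 < t τ)
    (ht : ∀ τ ∈ D, HasDerivWithinAt t (t' τ) D τ)
    (ht'c : ContinuousOn t' D)
    (hx : ∀ τ ∈ D, HasDerivWithinAt x (x' τ) D τ)
    (hx' : ∀ τ ∈ D, HasDerivWithinAt x' (x'' τ) D τ)
    (hx''c : ContinuousOn x'' D)
    (htlb : ∀ τ ∈ D, c ≤ t' τ)
    (hx'0 : x' τ₀ = 0)
    (hODE : ∀ τ ∈ D, x'' τ + p * (t τ)⁻¹ * t' τ * x' τ = ς τ)
    (hς : ∀ τ ∈ D, |ς τ| ≤ K * (t τ) ^ (-p)) :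
    ∀ τ ∈ D, |x' τ| ≤ K / c * (t τ) ^ (-p) * (t τ - t τ₀) := by
  have hτ₀D : τ₀ ∈ D := by rw [hD]; exact ⟨le_refl _, hτb⟩
  have hord : D.OrdConnected := by
    rw [hD]
    constructor
    intro a ha b hb z hz
    exact ⟨ha.1.trans hz.1, lt_of_le_of_lt (EReal.coe_le_coe_iff.2 hz.2) hb.2⟩
  have hconv : Convex ℝ D := convex_iff_ordConnected.mpr hord
  -- derivative of y = t^p * x'
  set y : ℝ → ℝ := fun τ => t τ ^ p * x' τ with hy_def
  have hy : ∀ τ ∈ D, HasDerivWithinAt y (t τ ^ p * ς τ) D τ := by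
    intro τ hτ
    have htne : t τ ≠ 0 := (htpos τ hτ).ne'
    have h1 := ((ht τ hτ).rpow_const (p := p) (Or.inl htne)).mul (hx' τ hτ)
    have heq : t' τ * p * t τ ^ (p - 1) * x' τ + t τ ^ p * x'' τ = t τ ^ p * ς τ := by
      rw [← hODE τ hτ, Real.rpow_sub_one htne]
      field_simp
      ring
    rw [← heq]
    exact h1
  have hbound : ∀ τ ∈ D, ‖t τ ^ p * ς τ‖ ≤ K := by
    intro τ hτ
    have htpos' := htpos τ hτ
    have h1 : ‖t τ ^ p * ς τ‖ = t τ ^ p * |ς τ| := by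
      rw [Real.norm_eq_abs, abs_mul, abs_of_pos (Real.rpow_pos_of_pos htpos' p)]
    rw [h1]
    calc t τ ^ p * |ς τ| ≤ t τ ^ p * (K * t τ ^ (-p)) := by
          exact mul_le_mul_of_nonneg_left (hς τ hτ) (Real.rpow_pos_of_pos htpos' p).le
      _ = K * (t τ ^ p * t τ ^ (-p)) := by ring
      _ = K := by
          rw [← Real.rpow_add htpos', add_neg_cancel, Real.rpow_zero, mul_one]
  intro τ hτ
  have hττ₀ : τ₀ ≤ τ := by rw [hD] at hτ; exact hτ.1
  -- mean value inequality for y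
  have hmv := Convex.norm_image_sub_le_of_norm_hasDerivWithin_le hy hbound hconv hτ₀D hτ
  have hy0 : y τ₀ = 0 := by simp [hy_def, hx'0]
  rw [hy0, sub_zero, Real.norm_eq_abs, Real.norm_eq_abs, abs_of_nonneg (sub_nonneg.2 hττ₀)] at hmv
  -- lower bound on t τ - t τ₀
  have htc : ContinuousOn t D := fun σ hσ => (ht σ hσ).continuousWithinAt
  have htd : DifferentiableOn ℝ t (interior D) := by
    intro σ hσ
    exact (((ht σ (interior_subset hσ)).hasDerivAt
      (mem_interior_iff_mem_nhds.mp hσ)).differentiableAt).differentiableWithinAt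
  have htderiv : ∀ σ ∈ interior D, c ≤ deriv t σ := by
    intro σ hσ
    rw [((ht σ (interior_subset hσ)).hasDerivAt (mem_interior_iff_mem_nhds.mp hσ)).deriv]
    exact htlb σ (interior_subset hσ)
  have htgrow := hconv.mul_sub_le_image_sub_of_le_deriv htc htd htderiv τ₀ hτ₀D τ hτ hττ₀
  -- combine
  have htpos' := htpos τ hτ
  have hrp : (0:ℝ) < t τ ^ (-p) := Real.rpow_pos_of_pos htpos' (-p)
  have hxy : |x' τ| = t τ ^ (-p) * |y τ| := by
    rw [hy_def]
    simp only []
    rw [abs_mul, abs_of_pos (Real.rpow_pos_of_pos htpos' p), ← mul_assoc,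
      ← Real.rpow_add htpos', neg_add_cancel, Real.rpow_zero, one_mul]
  rw [hxy]
  have h2 : |y τ| ≤ K / c * (t τ - t τ₀) := by
    calc |y τ| ≤ K * (τ - τ₀) := hmv
      _ ≤ K / c * (t τ - t τ₀) := by
          rw [div_mul_eq_mul_div, le_div_iff₀ hc]
          calc K * (τ - τ₀) * c = K * (c * (τ - τ₀)) := by ring
            _ ≤ K * (t τ - t τ₀) := mul_le_mul_of_nonneg_left htgrow hK
  calc t τ ^ (-p) * |y τ| ≤ t τ ^ (-p) * (K / c * (t τ - t τ₀)) :=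
        mul_le_mul_of_nonneg_left h2 hrp.le
    _ = K / c * t τ ^ (-p) * (t τ - t τ₀) := by ring
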